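/- arXiv:1802.06602 — 7 statements merged into one kernel-verified Lean document; each statement's English description precedes it below -/
import Mathlib

section
/- Let g = ⊕_{p∈I} V_p be a direct sum decomposition of a Lie algebra g into subspaces, and suppose for each p, q ∈ I there is a subset i_{(p,q)} ⊆ I with [V_p, V_q] ⊆ ⊕_{r∈i_{(p,q)}} V_r. Let S be an abelian semigroup with a subset decomposition S = ∪_{p∈I} S_p that is in resonance with the subspace decomposition, i.e. S_p · S_q ⊆ ∩_{r∈i_{(p,q)}} S_r, where S_p · S_q denotes the set of all products of an element of S_p with an element of S_q. Then g_R = ⊕_{p∈I} W_p, with W_p := span(S_p) ⊗ V_p, is a Lie subalgebra of the S-expanded algebra g_S = S × g (the resonant subalgebra). -/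
open TensorProduct

/-- The resonant subalgebra: given a decomposition `g = ⊕_p V_p` with
`[V_p, V_q] ⊆ ⊕_{r ∈ i(p,q)} V_r` and a resonant subset decomposition `S = ∪_p S_p` of an
abelian semigroup, `g_R = ⊕_p span(S_p) ⊗ V_p` is closed under the bracket of the
S-expanded algebra `g_S = S × g`, hence a Lie subalgebra. -/
theorem stmt1 (K : Type*) [Field K] (L : Type*) [LieRing L] [LieAlgebra K L]
    (S : Type*) [CommSemigroup S] (I : Type*)
    (V : I → Submodule K L) (i : I → I → Set I)
    (hdecomp : ⨆ p, V p = ⊤)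
    (hV : ∀ p q, ∀ x ∈ V p, ∀ y ∈ V q, ⁅x, y⁆ ∈ ⨆ r ∈ i p q, V r)
    (Sp : I → Set S)
    (hcover : ∀ s : S, ∃ p, s ∈ Sp p)
    (hres : ∀ p q, ∀ s ∈ Sp p, ∀ t ∈ Sp q, ∀ r ∈ i p q, s * t ∈ Sp r)
    (B : (L ⊗[K] (S →₀ K)) →ₗ[K] (L ⊗[K] (S →₀ K)) →ₗ[K] (L ⊗[K] (S →₀ K)))
    (hB : ∀ (x y : L) (s t : S),
      B (x ⊗ₜ[K] Finsupp.single s 1) (y ⊗ₜ[K] Finsupp.single t 1)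
        = ⁅x, y⁆ ⊗ₜ[K] Finsupp.single (s * t) 1) :
    ∀ u ∈ Submodule.span K {z : L ⊗[K] (S →₀ K) |
        ∃ p, ∃ x ∈ V p, ∃ s ∈ Sp p, z = x ⊗ₜ[K] Finsupp.single s 1},
    ∀ v ∈ Submodule.span K {z : L ⊗[K] (S →₀ K) |
        ∃ p, ∃ x ∈ V p, ∃ s ∈ Sp p, z = x ⊗ₜ[K] Finsupp.single s 1},
      B u v ∈ Submodule.span K {z : L ⊗[K] (S →₀ K) |
        ∃ p, ∃ x ∈ V p, ∃ s ∈ Sp p, z = x ⊗ₜ[K] Finsupp.single s 1} := by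

  intro u hu v hv
  set M := Submodule.span K {z : L ⊗[K] (S →₀ K) |
        ∃ p, ∃ x ∈ V p, ∃ s ∈ Sp p, z = x ⊗ₜ[K] Finsupp.single s 1} with hM
  have key : ∀ (p q : I) (st : S), (∀ r ∈ i p q, st ∈ Sp r) →
      ∀ z ∈ (⨆ r ∈ i p q, V r), z ⊗ₜ[K] Finsupp.single st 1 ∈ M := by
    intro p q st hst z hz
    have hle : (⨆ r ∈ i p q, V r) ≤
        Submodule.comap ((TensorProduct.mk K L (S →₀ K)).flip (Finsupp.single st 1)) M := by
      refine iSup_le fun r => iSup_le fun hr w hw => ?_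
      exact Submodule.subset_span ⟨r, w, hw, st, hst r hr, rfl⟩
    exact hle hz
  induction hu using Submodule.span_induction with
  | mem u hu =>
    obtain ⟨p, x, hx, s, hs, rfl⟩ := hu
    induction hv using Submodule.span_induction with
    | mem v hv =>
      obtain ⟨q, y, hy, t, ht, rfl⟩ := hv
      rw [hB]
      exact key p q (s * t) (fun r hr => hres p q s hs t ht r hr) _ (hV p q x hx y hy)
    | zero => simp
    | add a b _ _ ha hb => rw [map_add]; exact M.add_mem ha hb
    | smul c a _ ha => rw [map_smul]; exact M.smul_mem c ha
  | zero => simp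
  | add a b _ _ ha hb => rw [map_add, LinearMap.add_apply]; exact M.add_mem ha hb
  | smul c a _ ha => rw [map_smul, LinearMap.smul_apply]; exact M.smul_mem c ha
end

section
/- Let g = V_0 ⊕ V_1 be a vector-space decomposition of a Lie algebra g such that [V_0, V_1] ⊆ V_1. Then the bilinear map on V_0 defined by (x, y) ↦ π_0([x, y]), where π_0 : g → V_0 is the projection along V_1, is antisymmetric and satisfies the Jacobi identity; hence V_0 with this projected bracket is a Lie algebra (the reduced algebra |V_0| of g). -/
/-- The reduced algebra `|V₀|`: if `g = V₀ ⊕ V₁` with `[V₀, V₁] ⊆ V₁`, then the projected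
bracket `(x, y) ↦ π₀ [x, y]` on `V₀` is antisymmetric and satisfies the Jacobi identity. -/
theorem stmt2 (K : Type*) [Field K] (L : Type*) [LieRing L] [LieAlgebra K L]
    (V₀ V₁ : Submodule K L) (hcompl : IsCompl V₀ V₁)
    (h01 : ∀ x ∈ V₀, ∀ y ∈ V₁, ⁅x, y⁆ ∈ V₁) :
    (∀ x y : V₀,
      Submodule.linearProjOfIsCompl V₀ V₁ hcompl ⁅(x : L), (y : L)⁆
        = - Submodule.linearProjOfIsCompl V₀ V₁ hcompl ⁅(y : L), (x : L)⁆) ∧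
    (∀ x y z : V₀,
      Submodule.linearProjOfIsCompl V₀ V₁ hcompl
          ⁅(x : L), ((Submodule.linearProjOfIsCompl V₀ V₁ hcompl ⁅(y : L), (z : L)⁆ : V₀) : L)⁆
      + Submodule.linearProjOfIsCompl V₀ V₁ hcompl
          ⁅(y : L), ((Submodule.linearProjOfIsCompl V₀ V₁ hcompl ⁅(z : L), (x : L)⁆ : V₀) : L)⁆
      + Submodule.linearProjOfIsCompl V₀ V₁ hcompl
          ⁅(z : L), ((Submodule.linearProjOfIsCompl V₀ V₁ hcompl ⁅(x : L), (y : L)⁆ : V₀) : L)⁆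
      = 0) := by
  set π := Submodule.linearProjOfIsCompl V₀ V₁ hcompl with hπ
  have key : ∀ (x : V₀) (w : L), π ⁅(x : L), ((π w : V₀) : L)⁆ = π ⁅(x : L), w⁆ := by
    intro x w
    have hmem : w - ((π w : V₀) : L) ∈ V₁ := by
      have hw := Submodule.projection_add_projection_eq_self hcompl w
      have h2 : w - ((π w : V₀) : L)
          = (Submodule.linearProjOfIsCompl V₁ V₀ hcompl.symm w : L) :=
        sub_eq_of_eq_add' hw.symm
      rw [h2]; exact Subtype.coe_prop _
    have hlie : ⁅(x : L), w - ((π w : V₀) : L)⁆ ∈ V₁ := h01 _ x.2 _ hmem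
    have h0 : π ⁅(x : L), w - ((π w : V₀) : L)⁆ = 0 :=
      Submodule.projectionOnto_apply_of_mem_right hcompl hlie
    rw [lie_sub, map_sub, sub_eq_zero] at h0
    exact h0.symm
  constructor
  · intro x y
    rw [← lie_skew, map_neg]
  · intro x y z
    rw [key x, key y, key z, ← map_add, ← map_add, lie_jacobi, map_zero]
end

section
/- Let S be an abelian semigroup possessing a zero (absorbing) element λ_0, i.e. λ_0 λ_α = λ_α λ_0 = λ_0 for all λ_α ∈ S, and let g be a Lie algebra. Then the subspace λ_0 ⊗ g := span{ λ_0 ⊗ x : x ∈ g } is a Lie ideal of the S-expanded algebra g_S = g ⊗ K[S], and the quotient g_S / (λ_0 ⊗ g) is a Lie algebra (the 0_S-reduced algebra), which is isomorphic as a vector space to the span of { λ_i ⊗ x : λ_i ≠ λ_0 } with bracket obtained by setting λ_0 ⊗ g to zero. -/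
open TensorProduct

/-- If the abelian semigroup `S` has a zero (absorbing) element `λ₀`, then `λ₀ ⊗ g` is a Lie
ideal of the S-expanded algebra `g_S = g ⊗ K[S]` (where `K[S]` is realised as a free
`K`-module `F` with basis `(e s)_{s ∈ S}` and the bracket is
`[x ⊗ e s, y ⊗ e t] = [x,y] ⊗ e (s*t)`), the quotient `g_S / (λ₀ ⊗ g)` carries an induced Lie
algebra structure (the `0_S`-reduced algebra), and this quotient is isomorphic as a vector
space to the span of `{λ_i ⊗ x : λ_i ≠ λ₀}` with bracket obtained by setting `λ₀ ⊗ g` to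
zero. -/
theorem stmt3 (K : Type*) [Field K] (L : Type*) [LieRing L] [LieAlgebra K L]
    (S : Type*) [CommSemigroup S] (l₀ : S)
    (hzero : ∀ s : S, l₀ * s = l₀ ∧ s * l₀ = l₀)
    (F : Type*) [AddCommGroup F] [Module K F] (e : Module.Basis S K F)
    (B : (L ⊗[K] F) →ₗ[K] (L ⊗[K] F) →ₗ[K] (L ⊗[K] F))
    (hB : ∀ (x y : L) (s t : S),
      B (x ⊗ₜ[K] e s) (y ⊗ₜ[K] e t) = ⁅x, y⁆ ⊗ₜ[K] e (s * t))
    (hBalt : ∀ u, B u u = 0)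
    (hBjac : ∀ u v w, B u (B v w) + B v (B w u) + B w (B u v) = 0) :
    ∀ Iz : Submodule K (L ⊗[K] F),
      Iz = Submodule.span K {z : L ⊗[K] F | ∃ x : L, z = x ⊗ₜ[K] e l₀} →
      (∀ u, ∀ v ∈ Iz, B u v ∈ Iz ∧ B v u ∈ Iz) ∧
      (∃ B' : ((L ⊗[K] F) ⧸ Iz) →ₗ[K] ((L ⊗[K] F) ⧸ Iz) →ₗ[K] ((L ⊗[K] F) ⧸ Iz),
        (∀ u v, B' (Iz.mkQ u) (Iz.mkQ v) = Iz.mkQ (B u v)) ∧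
        (∀ u, B' u u = 0) ∧
        (∀ u v w, B' u (B' v w) + B' v (B' w u) + B' w (B' u v) = 0)) ∧
      Nonempty (((L ⊗[K] F) ⧸ Iz) ≃ₗ[K]
        (Submodule.span K {z : L ⊗[K] F |
          ∃ x : L, ∃ s : S, s ≠ l₀ ∧ z = x ⊗ₜ[K] e s})) := by
  classical
  intro Iz hIz
  -- pure tensors on basis elements span everything
  have htop : Submodule.span K {z : L ⊗[K] F | ∃ x : L, ∃ s : S, z = x ⊗ₜ[K] e s} = ⊤ := by
    rw [eq_top_iff]
    rintro u -
    induction u using TensorProduct.induction_on with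
    | zero => exact Submodule.zero_mem _
    | tmul x f =>
      have hf : f ∈ Submodule.span K (Set.range e) := by rw [e.span_eq]; trivial
      refine Submodule.span_induction (p := fun f _ =>
          x ⊗ₜ[K] f ∈ Submodule.span K {z : L ⊗[K] F | ∃ x : L, ∃ s : S, z = x ⊗ₜ[K] e s})
        ?_ ?_ ?_ ?_ hf
      · rintro _ ⟨s, rfl⟩
        exact Submodule.subset_span ⟨x, s, rfl⟩
      · simp only [TensorProduct.tmul_zero]; exact Submodule.zero_mem _
      · intro a b _ _ ha hb
        rw [TensorProduct.tmul_add]; exact Submodule.add_mem _ ha hb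
      · intro c a _ ha
        rw [TensorProduct.tmul_smul]; exact Submodule.smul_mem _ c ha
    | add a b ha hb => exact Submodule.add_mem _ ha hb
  -- Ideal property
  have hideal : ∀ u, ∀ v ∈ Iz, B u v ∈ Iz ∧ B v u ∈ Iz := by
    intro u v hv
    rw [hIz] at hv ⊢
    refine Submodule.span_induction (p := fun v _ =>
        B u v ∈ Submodule.span K {z : L ⊗[K] F | ∃ x : L, z = x ⊗ₜ[K] e l₀} ∧
        B v u ∈ Submodule.span K {z : L ⊗[K] F | ∃ x : L, z = x ⊗ₜ[K] e l₀}) ?_ ?_ ?_ ?_ hv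
    · rintro _ ⟨x, rfl⟩
      -- now induct on u over pure tensors
      have hu : u ∈ Submodule.span K {z : L ⊗[K] F | ∃ x : L, ∃ s : S, z = x ⊗ₜ[K] e s} := by
        rw [htop]; trivial
      refine Submodule.span_induction (p := fun u _ =>
          B u (x ⊗ₜ[K] e l₀) ∈ Submodule.span K {z : L ⊗[K] F | ∃ x : L, z = x ⊗ₜ[K] e l₀} ∧
          B (x ⊗ₜ[K] e l₀) u ∈ Submodule.span K {z : L ⊗[K] F | ∃ x : L, z = x ⊗ₜ[K] e l₀})
        ?_ ?_ ?_ ?_ hu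
      · rintro _ ⟨y, s, rfl⟩
        constructor
        · rw [hB, (hzero s).2]; exact Submodule.subset_span ⟨_, rfl⟩
        · rw [hB, (hzero s).1]; exact Submodule.subset_span ⟨_, rfl⟩
      · simp only [map_zero, LinearMap.zero_apply]
        exact ⟨Submodule.zero_mem _, Submodule.zero_mem _⟩
      · intro a b _ _ ha hb
        simp only [map_add, LinearMap.add_apply]
        exact ⟨Submodule.add_mem _ ha.1 hb.1, Submodule.add_mem _ ha.2 hb.2⟩
      · intro c a _ ha
        simp only [map_smul, LinearMap.smul_apply]
        exact ⟨Submodule.smul_mem _ c ha.1, Submodule.smul_mem _ c ha.2⟩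
    · simp only [map_zero, LinearMap.zero_apply]
      exact ⟨Submodule.zero_mem _, Submodule.zero_mem _⟩
    · intro a b _ _ ha hb
      simp only [map_add, LinearMap.add_apply]
      exact ⟨Submodule.add_mem _ ha.1 hb.1, Submodule.add_mem _ ha.2 hb.2⟩
    · intro c a _ ha
      simp only [map_smul, LinearMap.smul_apply]
      exact ⟨Submodule.smul_mem _ c ha.1, Submodule.smul_mem _ c ha.2⟩
  refine ⟨hideal, ?_, ?_⟩
  · -- induced bracket on the quotient
    have hg0 : ∀ u, ∀ v ∈ Iz, (Iz.mkQ.comp (B u)) v = 0 := by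
      intro u v hv
      simp only [LinearMap.comp_apply, Submodule.mkQ_apply, Submodule.Quotient.mk_eq_zero]
      exact (hideal u v hv).1
    let g : (L ⊗[K] F) →ₗ[K] ((L ⊗[K] F) ⧸ Iz) →ₗ[K] ((L ⊗[K] F) ⧸ Iz) :=
      { toFun := fun u => Iz.liftQ (Iz.mkQ.comp (B u)) (fun v hv => hg0 u v hv)
        map_add' := by
          intro a b
          apply LinearMap.ext
          intro q
          obtain ⟨v, rfl⟩ := Iz.mkQ_surjective q
          simp [Submodule.liftQ_apply]; rfl
        map_smul' := by
          intro c a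
          apply LinearMap.ext
          intro q
          obtain ⟨v, rfl⟩ := Iz.mkQ_surjective q
          simp [Submodule.liftQ_apply]; rfl }
    have hg : ∀ u v, g u (Iz.mkQ v) = Iz.mkQ (B u v) := by
      intro u v; simp [g, Submodule.liftQ_apply]; rfl
    have hgz : ∀ u ∈ Iz, g u = 0 := by
      intro u hu
      apply LinearMap.ext
      intro q
      obtain ⟨v, rfl⟩ := Iz.mkQ_surjective q
      rw [hg]
      simp only [LinearMap.zero_apply, Submodule.mkQ_apply, Submodule.Quotient.mk_eq_zero]
      exact (hideal v u hu).2
    have hlift : ∀ u v, (Iz.liftQ g hgz) (Iz.mkQ u) (Iz.mkQ v) = Iz.mkQ (B u v) := by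
      intro u v
      simp only [Submodule.mkQ_apply, Submodule.liftQ_apply]
      exact hg u v
    refine ⟨Iz.liftQ g hgz, ?_, ?_, ?_⟩
    · exact hlift
    · intro q
      obtain ⟨u, rfl⟩ := Iz.mkQ_surjective q
      rw [hlift, hBalt, map_zero]
    · intro q r p
      obtain ⟨u, rfl⟩ := Iz.mkQ_surjective q
      obtain ⟨v, rfl⟩ := Iz.mkQ_surjective r
      obtain ⟨w, rfl⟩ := Iz.mkQ_surjective p
      rw [hlift, hlift, hlift, hlift, hlift, hlift]
      rw [← map_add, ← map_add, hBjac, map_zero]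
  · -- vector space isomorphism with the complementary span
    set J : Submodule K (L ⊗[K] F) :=
      Submodule.span K {z : L ⊗[K] F | ∃ x : L, ∃ s : S, s ≠ l₀ ∧ z = x ⊗ₜ[K] e s} with hJ
    -- projection onto the l₀ component
    let p₀ : F →ₗ[K] F := e.constr K (fun s => if s = l₀ then e l₀ else 0)
    let P : (L ⊗[K] F) →ₗ[K] (L ⊗[K] F) := LinearMap.lTensor L p₀
    have hP : ∀ (x : L) (s : S), P (x ⊗ₜ[K] e s) = if s = l₀ then x ⊗ₜ[K] e l₀ else 0 := by
      intro x s
      simp only [P, LinearMap.lTensor_tmul, p₀, Module.Basis.constr_basis]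
      split_ifs with h
      · subst h; rfl
      · exact TensorProduct.tmul_zero _ x
    have hPI : ∀ z ∈ Iz, P z = z := by
      intro z hz
      rw [hIz] at hz
      refine Submodule.span_induction (p := fun z _ => P z = z) ?_ ?_ ?_ ?_ hz
      · rintro _ ⟨x, rfl⟩; rw [hP]; simp
      · exact map_zero P
      · intro a b _ _ ha hb; rw [map_add, ha, hb]
      · intro c a _ ha; rw [map_smul, ha]
    have hPJ : ∀ z ∈ J, P z = 0 := by
      intro z hz
      refine Submodule.span_induction (p := fun z _ => P z = 0) ?_ ?_ ?_ ?_ hz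
      · rintro _ ⟨x, s, hs, rfl⟩; rw [hP, if_neg hs]
      · exact map_zero P
      · intro a b _ _ ha hb; rw [map_add, ha, hb, add_zero]
      · intro c a _ ha; rw [map_smul, ha, smul_zero]
    have hcompl : IsCompl Iz J := by
      constructor
      · rw [disjoint_iff_inf_le]
        rintro z ⟨hz1, hz2⟩
        have := hPI z hz1
        rw [hPJ z hz2] at this
        simp [← this]
      · rw [codisjoint_iff_le_sup]
        rw [← htop]
        rw [Submodule.span_le]
        rintro _ ⟨x, s, rfl⟩
        by_cases hs : s = l₀
        · subst hs
          exact Submodule.mem_sup_left (hIz ▸ Submodule.subset_span ⟨x, rfl⟩)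
        · exact Submodule.mem_sup_right (Submodule.subset_span ⟨x, s, hs, rfl⟩)
    exact ⟨Submodule.quotientEquivOfIsCompl Iz J hcompl⟩
end

section
/- Let g = ⊕_{p=0}^{n} V_p be a Lie algebra decomposition satisfying the Weimar–Woods conditions [V_p, V_q] ⊆ ⊕_{s ≤ p+q} V_s. In the infinite S-expansion g_S^∞ = g ⊗ K[S^{(∞)}] with S^{(∞)} = (ℕ ∪ {∞}, +), let g_R^∞ = ⊕_{p=0}^{n} span{ λ_α ⊗ v : α ≥ p, v ∈ V_p } be the resonant subalgebra, and let ĝ = ⊕_{p=0}^{n} span{ λ_α ⊗ v : α ≥ p+1, v ∈ V_p }. Then ĝ is a Lie ideal of g_R^∞, and the quotient g_R^∞ / ĝ is a finite-dimensional Lie algebra whenever g is finite-dimensional. -/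
open TensorProduct

/-- For a Lie algebra decomposition `g = ⊕_{p=0}^n V_p` satisfying the Weimar–Woods conditions
`[V_p, V_q] ⊆ ⊕_{s ≤ p+q} V_s`, consider the infinite S-expansion
`g_S^∞ = g ⊗ K[S^(∞)]`, `S^(∞) = (ℕ ∪ {∞}, +)`, with `K[S^(∞)]` realised as a free
`K`-module `F` with basis `(e α)_{α ∈ ℕ∞}` and bracket `[x ⊗ e α, y ⊗ e β] = [x,y] ⊗ e (α+β)`.
Let `g_R^∞ = ⊕_p span{e α ⊗ v : α ≥ p, v ∈ V_p}` be the resonant subalgebra and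
`ĝ = ⊕_p span{e α ⊗ v : α ≥ p+1, v ∈ V_p}`.  Then `ĝ ⊆ g_R^∞` is a Lie ideal of `g_R^∞`,
and the quotient `g_R^∞ / ĝ` is finite-dimensional whenever `g` is. -/
theorem stmt8 (K : Type*) [Field K] (L : Type*) [LieRing L] [LieAlgebra K L]
    [FiniteDimensional K L] (n : ℕ) (V : Fin (n + 1) → Submodule K L)
    (hsup : ⨆ p, V p = ⊤)
    (hWW : ∀ p q : Fin (n + 1), ∀ x ∈ V p, ∀ y ∈ V q,
      ⁅x, y⁆ ∈ ⨆ s : Fin (n + 1), ⨆ _ : (s : ℕ) ≤ (p : ℕ) + (q : ℕ), V s)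
    (F : Type*) [AddCommGroup F] [Module K F] (e : Module.Basis ℕ∞ K F)
    (B : (L ⊗[K] F) →ₗ[K] (L ⊗[K] F) →ₗ[K] (L ⊗[K] F))
    (hB : ∀ (x y : L) (α β : ℕ∞),
      B (x ⊗ₜ[K] e α) (y ⊗ₜ[K] e β) = ⁅x, y⁆ ⊗ₜ[K] e (α + β)) :
    ∀ gR gH : Submodule K (L ⊗[K] F),
      gR = Submodule.span K {z : L ⊗[K] F |
        ∃ p : Fin (n + 1), ∃ x ∈ V p, ∃ α : ℕ∞, ((p : ℕ) : ℕ∞) ≤ α ∧ z = x ⊗ₜ[K] e α} →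
      gH = Submodule.span K {z : L ⊗[K] F |
        ∃ p : Fin (n + 1), ∃ x ∈ V p, ∃ α : ℕ∞, ((p : ℕ) : ℕ∞) + 1 ≤ α ∧ z = x ⊗ₜ[K] e α} →
      gH ≤ gR ∧
      (∀ u ∈ gR, ∀ v ∈ gH, B u v ∈ gH ∧ B v u ∈ gH) ∧
      FiniteDimensional K (↥gR ⧸ Submodule.comap gR.subtype gH) := by
  intro gR gH hgR hgH
  set φ : ℕ∞ → L →ₗ[K] L ⊗[K] F := fun γ => (TensorProduct.mk K L F).flip (e γ) with hφ
  have hφ' : ∀ (γ : ℕ∞) (x : L), φ γ x = x ⊗ₜ[K] e γ := fun γ x => rfl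
  have keyA : ∀ (m : ℕ) (z : L), z ∈ (⨆ s : Fin (n+1), ⨆ _ : (s : ℕ) ≤ m, V s) →
      ∀ γ : ℕ∞, (m : ℕ∞) + 1 ≤ γ → z ⊗ₜ[K] e γ ∈ gH := by
    intro m z hz γ hγ
    have hle : (⨆ s : Fin (n+1), ⨆ _ : (s : ℕ) ≤ m, V s) ≤ gH.comap (φ γ) := by
      refine iSup_le fun s => iSup_le fun hs x hx => ?_
      rw [Submodule.mem_comap, hφ', hgH]
      refine Submodule.subset_span ⟨s, x, hx, γ, ?_, rfl⟩
      calc ((s : ℕ) : ℕ∞) + 1 ≤ (m : ℕ∞) + 1 :=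
            add_le_add_left (by exact_mod_cast hs) 1
        _ ≤ γ := hγ
    exact hle hz
  have hHR : gH ≤ gR := by
    rw [hgH, hgR]
    refine Submodule.span_le.2 fun z hz => ?_
    obtain ⟨p, x, hx, α, hα, rfl⟩ := hz
    exact Submodule.subset_span ⟨p, x, hx, α, le_trans le_self_add hα, rfl⟩
  refine ⟨hHR, ?_, ?_⟩
  · intro u hu v hv
    rw [hgR] at hu
    induction hu using Submodule.span_induction with
    | mem u hu =>
      obtain ⟨p, x, hx, α, hα, rfl⟩ := hu
      rw [hgH] at hv
      induction hv using Submodule.span_induction with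
      | mem v hv =>
        obtain ⟨q, y, hy, β, hβ, rfl⟩ := hv
        constructor
        · rw [hB]
          refine keyA ((p : ℕ) + (q : ℕ)) _ (hWW p q x hx y hy) _ ?_
          push_cast
          calc ((p : ℕ) : ℕ∞) + (q : ℕ) + 1 = ((p : ℕ) : ℕ∞) + (((q : ℕ) : ℕ∞) + 1) := by ring
            _ ≤ α + β := add_le_add hα hβ
        · rw [hB]
          refine keyA ((q : ℕ) + (p : ℕ)) _ (hWW q p y hy x hx) _ ?_
          push_cast
          calc ((q : ℕ) : ℕ∞) + (p : ℕ) + 1 = (((q : ℕ) : ℕ∞) + 1) + ((p : ℕ) : ℕ∞) := by ring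
            _ ≤ β + α := add_le_add hβ hα
      | zero =>
        simp only [map_zero, LinearMap.zero_apply]
        exact ⟨zero_mem _, zero_mem _⟩
      | add v w hv hw ihv ihw =>
        refine ⟨?_, ?_⟩
        · rw [map_add]; exact add_mem ihv.1 ihw.1
        · rw [map_add, LinearMap.add_apply]; exact add_mem ihv.2 ihw.2
      | smul a v hv ihv =>
        refine ⟨?_, ?_⟩
        · rw [map_smul]; exact Submodule.smul_mem _ _ ihv.1
        · rw [map_smul, LinearMap.smul_apply]; exact Submodule.smul_mem _ _ ihv.2
    | zero =>
      simp only [map_zero, LinearMap.zero_apply]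
      exact ⟨zero_mem _, zero_mem _⟩
    | add u w hu hw ihu ihw =>
      refine ⟨?_, ?_⟩
      · rw [map_add, LinearMap.add_apply]; exact add_mem ihu.1 ihw.1
      · rw [map_add]; exact add_mem ihu.2 ihw.2
    | smul a u hu ihu =>
      refine ⟨?_, ?_⟩
      · rw [map_smul, LinearMap.smul_apply]; exact Submodule.smul_mem _ _ ihu.1
      · rw [map_smul]; exact Submodule.smul_mem _ _ ihu.2
  · set W : Submodule K (L ⊗[K] F) := ⨆ p : Fin (n+1), (V p).map (φ ((p : ℕ) : ℕ∞)) with hW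
    haveI : FiniteDimensional K W := by
      haveI : ∀ p : Fin (n+1), FiniteDimensional K ((V p).map (φ ((p : ℕ) : ℕ∞))) :=
        fun p => Module.Finite.map _ _
      infer_instance
    have hsub : gR ≤ gH ⊔ W := by
      rw [hgR]
      refine Submodule.span_le.2 fun z hz => ?_
      obtain ⟨p, x, hx, α, hα, rfl⟩ := hz
      rcases eq_or_lt_of_le hα with h | h
      · subst h
        exact Submodule.mem_sup_right
          (Submodule.mem_iSup_of_mem p (Submodule.mem_map.2 ⟨x, hx, rfl⟩))
      · refine Submodule.mem_sup_left ?_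
        rw [hgH]
        exact Submodule.subset_span
          ⟨p, x, hx, α, (ENat.add_one_le_iff (by simp)).2 h, rfl⟩
    haveI : FiniteDimensional K ↥(gR ⊓ W) :=
      Submodule.finiteDimensional_of_le (inf_le_right : gR ⊓ W ≤ W)
    let f : ↥(gR ⊓ W) →ₗ[K] ↥gR ⧸ Submodule.comap gR.subtype gH :=
      (Submodule.comap gR.subtype gH).mkQ ∘ₗ Submodule.inclusion inf_le_left
    have hf : Function.Surjective f := by
      intro c
      obtain ⟨u, rfl⟩ := Submodule.mkQ_surjective _ c
      obtain ⟨h, hh, w, hw, huw⟩ := Submodule.mem_sup.1 (hsub u.2)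
      have hwR : w ∈ gR := by
        have hwe : w = (u : L ⊗[K] F) - h := by rw [← huw, add_sub_cancel_left]
        rw [hwe]; exact Submodule.sub_mem _ u.2 (hHR hh)
      refine ⟨⟨w, hwR, hw⟩, ?_⟩
      show Submodule.Quotient.mk (Submodule.inclusion inf_le_left ⟨w, hwR, hw⟩)
          = Submodule.Quotient.mk u
      rw [Submodule.Quotient.eq, Submodule.mem_comap]
      have : ((Submodule.inclusion (inf_le_left : gR ⊓ W ≤ gR) ⟨w, hwR, hw⟩ - u : ↥gR)
          : L ⊗[K] F) = -h := by
        rw [Submodule.coe_sub, Submodule.coe_inclusion, ← huw]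
        abel
      rw [Submodule.subtype_apply, this]
      exact neg_mem hh
    exact Module.Finite.of_surjective f hf
end

section
/- Let g be a Lie algebra with an invariant symmetric bilinear form ⟨·,·⟩ (i.e. ⟨[x,y],z⟩ = ⟨x,[y,z]⟩), let S be a finite abelian semigroup with 2-selector K_{αβ}^γ, and let (α^γ) be any family of scalars indexed by elements of S. Then the symmetric bilinear form on the S-expanded algebra g_S = g ⊗ K[S] defined by ⟨x⊗λ_α, y⊗λ_β⟩_S := Σ_γ α^γ K_{αβ}^γ ⟨x,y⟩ is invariant for g_S, i.e. ⟨[u,v],w⟩_S = ⟨u,[v,w]⟩_S for all u,v,w ∈ g_S. -/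
open TensorProduct

/-- Invariant tensors for S-expanded algebras: if `⟨·,·⟩` is an invariant symmetric bilinear
form on `g`, `S` a finite abelian semigroup with 2-selector `K_{αβ}^γ`, and `(α^γ)` any family
of scalars, then the symmetric bilinear form on `g_S = g ⊗ K[S]` defined by
`⟨x⊗λ_α, y⊗λ_β⟩_S = Σ_γ α^γ K_{αβ}^γ ⟨x,y⟩ = α^(λ_α λ_β) ⟨x,y⟩` is invariant for `g_S`. -/
theorem stmt10 (K : Type*) [Field K] (L : Type*) [LieRing L] [LieAlgebra K L]
    (S : Type*) [CommSemigroup S] [Fintype S]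
    (Bf : L →ₗ[K] L →ₗ[K] K)
    (hsymm : ∀ x y, Bf x y = Bf y x)
    (hinv : ∀ x y z, Bf ⁅x, y⁆ z = Bf x ⁅y, z⁆)
    (a : S → K)
    (B : (L ⊗[K] (S →₀ K)) →ₗ[K] (L ⊗[K] (S →₀ K)) →ₗ[K] (L ⊗[K] (S →₀ K)))
    (hB : ∀ (x y : L) (s t : S),
      B (x ⊗ₜ[K] Finsupp.single s 1) (y ⊗ₜ[K] Finsupp.single t 1)
        = ⁅x, y⁆ ⊗ₜ[K] Finsupp.single (s * t) 1)
    (Φ : (L ⊗[K] (S →₀ K)) →ₗ[K] (L ⊗[K] (S →₀ K)) →ₗ[K] K)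
    (hΦ : ∀ (x y : L) (s t : S),
      Φ (x ⊗ₜ[K] Finsupp.single s 1) (y ⊗ₜ[K] Finsupp.single t 1) = a (s * t) * Bf x y) :
    (∀ u v, Φ u v = Φ v u) ∧
    (∀ u v w, Φ (B u v) w = Φ u (B v w)) := by
  set gens : Set (L ⊗[K] (S →₀ K)) :=
    {w | ∃ x s, w = x ⊗ₜ[K] Finsupp.single s 1} with hgens
  have hspan : ∀ u : L ⊗[K] (S →₀ K), u ∈ Submodule.span K gens := by
    intro u
    induction u using TensorProduct.induction_on with
    | zero => exact Submodule.zero_mem _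
    | add u v hu hv => exact Submodule.add_mem _ hu hv
    | tmul x f =>
      induction f using Finsupp.induction_linear with
      | zero => simpa using Submodule.zero_mem (Submodule.span K gens)
      | add f g hf hg => rw [TensorProduct.tmul_add]; exact Submodule.add_mem _ hf hg
      | single s c =>
        have : x ⊗ₜ[K] Finsupp.single s c = c • (x ⊗ₜ[K] Finsupp.single s 1) := by
          rw [TensorProduct.smul_tmul', TensorProduct.smul_tmul]
          congr 1
          simp [Finsupp.smul_single]
        rw [this]
        exact Submodule.smul_mem _ _ (Submodule.subset_span ⟨x, s, rfl⟩)
  constructor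
  · intro u v
    induction hspan u using Submodule.span_induction with
    | zero => simp
    | add u₁ u₂ _ _ h1 h2 => simp [h1, h2]
    | smul c u₁ _ h1 => simp [h1]
    | mem u hu =>
      obtain ⟨x, s, rfl⟩ := hu
      induction hspan v using Submodule.span_induction with
      | zero => simp
      | add v₁ v₂ _ _ h1 h2 => simp [h1, h2]
      | smul c v₁ _ h1 => simp [h1]
      | mem v hv =>
        obtain ⟨y, t, rfl⟩ := hv
        rw [hΦ, hΦ, hsymm, mul_comm s t]
  · intro u v w
    induction hspan u using Submodule.span_induction with
    | zero => simp
    | add u₁ u₂ _ _ h1 h2 => simp [h1, h2]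
    | smul c u₁ _ h1 => simp [h1]
    | mem u hu =>
      obtain ⟨x, s, rfl⟩ := hu
      induction hspan v using Submodule.span_induction with
      | zero => simp
      | add v₁ v₂ _ _ h1 h2 => simp [h1, h2]
      | smul c v₁ _ h1 => simp [h1]
      | mem v hv =>
        obtain ⟨y, t, rfl⟩ := hv
        induction hspan w using Submodule.span_induction with
        | zero => simp
        | add w₁ w₂ _ _ h1 h2 => simp [h1, h2]
        | smul c w₁ _ h1 => simp [h1]
        | mem w hw =>
          obtain ⟨z, r, rfl⟩ := hw
          rw [hB, hB, hΦ, hΦ, hinv, mul_assoc]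
end

section
/- Let (V, η) be a finite-dimensional vector space with a nondegenerate symmetric bilinear form, and let so(V) denote the Lie algebra of η-antisymmetric endomorphisms. Define the Maxwell algebra as the vector space so(V) ⊕ V ⊕ Λ²V with brackets: [A, B] the commutator in so(V); [A, v] = A(v) for A ∈ so(V), v ∈ V; [A, ω] the natural action of so(V) on Λ²V; [v, w] = v ∧ w ∈ Λ²V for v, w ∈ V; and [Λ²V, V] = [Λ²V, Λ²V] = 0. Then these brackets satisfy antisymmetry and the Jacobi identity, so the Maxwell algebra is a Lie algebra in which Λ²V is a central extension term of the translation sector. -/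
open TensorProduct

namespace Stmt15Aux

variable (K : Type*) [Field K] (V : Type*) [AddCommGroup V] [Module K V]

/-- The wedge alternating map into the second exterior power. -/
noncomputable def altW : V [⋀^Fin 2]→ₗ[K] ↥(⋀[K]^2 V) :=
  (ExteriorAlgebra.ιMulti K 2).codRestrict _ fun v =>
    ExteriorAlgebra.ιMulti_range K 2 (Set.mem_range_self v)

@[simp] lemma altW_coe (m : Fin 2 → V) :
    ((altW K V m : ↥(⋀[K]^2 V)) : ExteriorAlgebra K V) = ExteriorAlgebra.ιMulti K 2 m := rfl

lemma upd0 (a c x : V) : Function.update ![a, c] (0 : Fin 2) x = ![x, c] := by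
  ext i; fin_cases i <;> simp

lemma upd1 (a c x : V) : Function.update ![a, c] (1 : Fin 2) x = ![a, x] := by
  ext i; fin_cases i <;> simp

lemma altW_addl (a b c : V) : altW K V ![a + b, c] = altW K V ![a, c] + altW K V ![b, c] := by
  have h := (altW K V).map_update_add ![a, c] 0 a b
  simpa [upd0] using h

lemma altW_addr (a b c : V) : altW K V ![a, b + c] = altW K V ![a, b] + altW K V ![a, c] := by
  have h := (altW K V).map_update_add ![a, b] 1 b c
  simpa [upd1] using h

lemma altW_smull (r : K) (a c : V) : altW K V ![r • a, c] = r • altW K V ![a, c] := by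
  have h := (altW K V).map_update_smul ![a, c] 0 r a
  simpa [upd0] using h

lemma altW_smulr (r : K) (a c : V) : altW K V ![a, r • c] = r • altW K V ![a, c] := by
  have h := (altW K V).map_update_smul ![a, c] 1 r c
  simpa [upd1] using h

/-- The wedge as a bilinear map. -/
noncomputable def W : V →ₗ[K] V →ₗ[K] ↥(⋀[K]^2 V) :=
  LinearMap.mk₂ K (fun v w => altW K V ![v, w]) (altW_addl K V) (altW_smull K V)
    (altW_addr K V) (altW_smulr K V)

lemma W_apply (v w : V) : W K V v w = altW K V ![v, w] := rfl

lemma W_same (a : V) : W K V a a = 0 :=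
  (altW K V).map_eq_zero_of_eq ![a, a] (by simp : ![a,a] 0 = ![a,a] 1) (by decide)

lemma W_anti' (a b : V) : W K V a b = - W K V b a := by
  have h : W K V (a + b) (a + b) = 0 := W_same K V _
  rw [map_add] at h
  simp only [LinearMap.add_apply, map_add, W_same] at h
  rw [eq_neg_iff_add_eq_zero]
  linear_combination (norm := abel) h

lemma W_anti (a b : V) : W K V a b = - W K V b a := W_anti' K V a b

lemma altW_anti (a b : V) : altW K V ![a, b] = - altW K V ![b, a] := W_anti' K V a b

/-- The derivation action of an endomorphism on degree-2 wedges, as an alternating map. -/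
noncomputable def dAlt (A : Module.End K V) : V [⋀^Fin 2]→ₗ[K] ↥(⋀[K]^2 V) where
  toFun m := W K V (A (m 0)) (m 1) + W K V (m 0) (A (m 1))
  map_update_add' m i x y := by
    fin_cases i <;>
      simp [Function.update, map_add, LinearMap.add_apply] <;> abel
  map_update_smul' m i r x := by
    fin_cases i <;>
      simp [Function.update, map_smul, LinearMap.smul_apply, smul_add]
  map_eq_zero_of_eq' m i j hm hij := by
    fin_cases i <;> fin_cases j <;> simp_all
    · rw [W_anti K V (A (m 1)) (m 1)]; abel
    · rw [W_anti K V (A (m 0)) (m 0)]; abel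


@[simp] lemma dAlt_apply (A : Module.End K V) (m : Fin 2 → V) :
    dAlt K V A m = W K V (A (m 0)) (m 1) + W K V (m 0) (A (m 1)) := rfl

/-- The action of an endomorphism on the second exterior power, by derivations. -/
noncomputable def rho (A : Module.End K V) : ↥(⋀[K]^2 V) →ₗ[K] ↥(⋀[K]^2 V) :=
  (ExteriorAlgebra.liftAlternating
    (Function.update (0 : ∀ i, V [⋀^Fin i]→ₗ[K] ↥(⋀[K]^2 V)) 2 (dAlt K V A))).comp
    (⋀[K]^2 V).subtype

@[simp] lemma rho_W (A : Module.End K V) (v w : V) :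
    rho K V A (W K V v w) = W K V (A v) w + W K V v (A w) := by
  have h1 : ((⋀[K]^2 V).subtype (W K V v w)) = ExteriorAlgebra.ιMulti K 2 ![v, w] := rfl
  rw [rho, LinearMap.comp_apply, h1, ExteriorAlgebra.liftAlternating_apply_ιMulti,
    Function.update_self]
  simp

lemma span_W : Submodule.span K (Set.range fun p : V × V => W K V p.1 p.2) = ⊤ := by
  rw [Submodule.eq_top_iff']
  rintro ⟨x, hx⟩
  have hx' : x ∈ Submodule.span K (Set.range (ExteriorAlgebra.ιMulti K 2 (M := V))) := by
    rwa [ExteriorAlgebra.ιMulti_span_fixedDegree]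
  have key : ∀ (y : ExteriorAlgebra K V),
      y ∈ Submodule.span K (Set.range (ExteriorAlgebra.ιMulti K 2 (M := V))) →
      ∀ (hy : y ∈ ⋀[K]^2 V), (⟨y, hy⟩ : ↥(⋀[K]^2 V)) ∈
        Submodule.span K (Set.range fun p : V × V => W K V p.1 p.2) := by
    intro y hy
    induction hy using Submodule.span_induction with
    | mem z hz =>
      obtain ⟨m, rfl⟩ := hz
      intro hmem
      have : (⟨ExteriorAlgebra.ιMulti K 2 m, hmem⟩ : ↥(⋀[K]^2 V)) = W K V (m 0) (m 1) := by
        apply Subtype.ext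
        simp only [W_apply, altW_coe]
        congr 1
        ext i; fin_cases i <;> rfl
      rw [this]
      exact Submodule.subset_span ⟨(m 0, m 1), rfl⟩
    | zero =>
      intro hmem
      have : (⟨(0 : ExteriorAlgebra K V), hmem⟩ : ↥(⋀[K]^2 V)) = 0 := rfl
      rw [this]; exact Submodule.zero_mem _
    | add a b ha hb iha ihb =>
      intro hmem
      have ha2 : a ∈ ⋀[K]^2 V := by
        rw [← ExteriorAlgebra.ιMulti_span_fixedDegree]; exact ha
      have hb2 : b ∈ ⋀[K]^2 V := by
        rw [← ExteriorAlgebra.ιMulti_span_fixedDegree]; exact hb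
      have : (⟨a + b, hmem⟩ : ↥(⋀[K]^2 V)) = ⟨a, ha2⟩ + ⟨b, hb2⟩ := rfl
      rw [this]; exact Submodule.add_mem _ (iha ha2) (ihb hb2)
    | smul r a ha iha =>
      intro hmem
      have ha2 : a ∈ ⋀[K]^2 V := by
        rw [← ExteriorAlgebra.ιMulti_span_fixedDegree]; exact ha
      have : (⟨r • a, hmem⟩ : ↥(⋀[K]^2 V)) = r • ⟨a, ha2⟩ := rfl
      rw [this]; exact Submodule.smul_mem _ _ (iha ha2)
  exact key x hx' hx

/-- Extensionality for linear maps out of the second exterior power. -/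
lemma wext {N : Type*} [AddCommGroup N] [Module K N]
    {f g : ↥(⋀[K]^2 V) →ₗ[K] N} (h : ∀ v w, f (W K V v w) = g (W K V v w)) : f = g := by
  apply LinearMap.ext_on (span_W K V)
  rintro x ⟨⟨v, w⟩, rfl⟩
  exact h v w

@[simp] lemma rho_zero : rho K V (0 : Module.End K V) = 0 := by
  apply wext
  intro v w
  simp [rho_W]

lemma rho_add (A B : Module.End K V) :
    rho K V (A + B) = rho K V A + rho K V B := by
  apply wext
  intro v w
  simp only [rho_W, LinearMap.add_apply, rho_W, LinearMap.add_apply, map_add]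
  abel

lemma rho_smul (r : K) (A : Module.End K V) :
    rho K V (r • A) = r • rho K V A := by
  apply wext
  intro v w
  simp only [rho_W, LinearMap.smul_apply, LinearMap.smul_apply, map_smul, smul_add]

lemma rho_bracket (A B : Module.End K V) (ω : ↥(⋀[K]^2 V)) :
    rho K V ⁅A, B⁆ ω = rho K V A (rho K V B ω) - rho K V B (rho K V A ω) := by
  have : rho K V ⁅A, B⁆ = rho K V A ∘ₗ rho K V B - rho K V B ∘ₗ rho K V A := by
    apply wext
    intro v w
    simp only [rho_W, LinearMap.sub_apply, LinearMap.comp_apply, rho_W, map_add,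
      Ring.lie_def, LinearMap.sub_apply, Module.End.mul_apply]
    simp only [map_sub, LinearMap.sub_apply]
    abel
  rw [this]; rfl


variable (eta : LinearMap.BilinForm K V)

lemma coe_smul (c : K) (A : ↥(skewAdjointLieSubalgebra eta)) :
    ((c • A : ↥(skewAdjointLieSubalgebra eta)) : Module.End K V) = c • (A : Module.End K V) := rfl

lemma coe_add' (A B : ↥(skewAdjointLieSubalgebra eta)) :
    ((A + B : ↥(skewAdjointLieSubalgebra eta)) : Module.End K V)
      = (A : Module.End K V) + (B : Module.End K V) := rfl

/-- The Maxwell bracket. -/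
noncomputable def brkt :
    (↥(skewAdjointLieSubalgebra eta) × V × ↥(⋀[K]^2 V)) →ₗ[K]
    (↥(skewAdjointLieSubalgebra eta) × V × ↥(⋀[K]^2 V)) →ₗ[K]
    (↥(skewAdjointLieSubalgebra eta) × V × ↥(⋀[K]^2 V)) :=
  LinearMap.mk₂ K
    (fun p q => (⁅p.1, q.1⁆,
      (p.1 : Module.End K V) q.2.1 - (q.1 : Module.End K V) p.2.1,
      rho K V (p.1 : Module.End K V) q.2.2 - rho K V (q.1 : Module.End K V) p.2.2
        + W K V p.2.1 q.2.1))
    (fun m₁ m₂ q => by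
      simp only [Prod.fst_add, Prod.snd_add, Prod.mk_add_mk, Prod.mk.injEq,
        coe_add', add_lie, map_add, LinearMap.add_apply, rho_add]
      exact ⟨by trivial, by abel, by abel⟩)
    (fun c m q => by
      simp only [Prod.smul_fst, Prod.smul_snd, Prod.smul_mk, Prod.mk.injEq,
        coe_smul, smul_lie, map_smul, LinearMap.smul_apply, rho_smul,
        smul_sub, smul_add])
    (fun m n₁ n₂ => by
      simp only [Prod.fst_add, Prod.snd_add, Prod.mk_add_mk, Prod.mk.injEq,
        coe_add', lie_add, map_add, LinearMap.add_apply, rho_add]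
      exact ⟨by trivial, by abel, by abel⟩)
    (fun c m n => by
      simp only [Prod.smul_fst, Prod.smul_snd, Prod.smul_mk, Prod.mk.injEq,
        coe_smul, lie_smul, map_smul, LinearMap.smul_apply, rho_smul,
        smul_sub, smul_add])

@[simp] lemma brkt_apply (p q : ↥(skewAdjointLieSubalgebra eta) × V × ↥(⋀[K]^2 V)) :
    brkt K V eta p q = (⁅p.1, q.1⁆,
      (p.1 : Module.End K V) q.2.1 - (q.1 : Module.End K V) p.2.1,
      rho K V (p.1 : Module.End K V) q.2.2 - rho K V (q.1 : Module.End K V) p.2.2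
        + W K V p.2.1 q.2.1) := rfl

end Stmt15Aux

open Stmt15Aux in
/-- The Maxwell algebra: on `so(V) ⊕ V ⊕ Λ²V` the brackets `[A,B] = AB−BA`, `[A,v] = A(v)`,
`[A, v∧w] = (Av)∧w + v∧(Aw)`, `[v,w] = v∧w`, `[Λ²V, V] = [Λ²V, Λ²V] = 0` satisfy
antisymmetry and the Jacobi identity, i.e. they define a Lie algebra in which `Λ²V` is a
central extension term of the translation sector. -/
theorem stmt15 (K : Type*) [Field K] (V : Type*) [AddCommGroup V] [Module K V]
    (η : LinearMap.BilinForm K V)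
    (hsymm : ∀ v w, η v w = η w v)
    (hnd : ∀ v, (∀ w, η v w = 0) → v = 0) :
    ∃ (wedge : V → V → ↥(⋀[K]^2 V))
      (b : (↥(skewAdjointLieSubalgebra η) × V × ↥(⋀[K]^2 V)) →ₗ[K]
           (↥(skewAdjointLieSubalgebra η) × V × ↥(⋀[K]^2 V)) →ₗ[K]
           (↥(skewAdjointLieSubalgebra η) × V × ↥(⋀[K]^2 V))),
      (∀ v w : V, (wedge v w : ExteriorAlgebra K V) = ExteriorAlgebra.ιMulti K 2 ![v, w]) ∧
      (∀ A A' : ↥(skewAdjointLieSubalgebra η), b (A, 0, 0) (A', 0, 0) = (⁅A, A'⁆, 0, 0)) ∧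
      (∀ (A : ↥(skewAdjointLieSubalgebra η)) (v : V),
        b (A, 0, 0) (0, v, 0) = (0, (A : Module.End K V) v, 0)) ∧
      (∀ (A : ↥(skewAdjointLieSubalgebra η)) (v w : V),
        b (A, 0, 0) (0, 0, wedge v w)
          = (0, 0, wedge ((A : Module.End K V) v) w + wedge v ((A : Module.End K V) w))) ∧
      (∀ v w : V, b (0, v, 0) (0, w, 0) = (0, 0, wedge v w)) ∧
      (∀ (ω : ↥(⋀[K]^2 V)) (v : V), b (0, 0, ω) (0, v, 0) = 0) ∧
      (∀ ω ω' : ↥(⋀[K]^2 V), b (0, 0, ω) (0, 0, ω') = 0) ∧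
      (∀ u, b u u = 0) ∧
      (∀ u v w, b u (b v w) + b v (b w u) + b w (b u v) = 0) := by
  refine ⟨fun v w => W K V v w, brkt K V η, fun v w => rfl, ?_, ?_, ?_, ?_, ?_, ?_, ?_, ?_⟩
  · intro A A'
    simp [brkt_apply]
  · intro A v
    simp [brkt_apply]
  · intro A v w
    simp [brkt_apply]
  · intro v w
    simp [brkt_apply]
  · intro ω v
    simp [brkt_apply, Prod.ext_iff]
  · intro ω ω'
    simp [brkt_apply, Prod.ext_iff]
  · rintro ⟨A, v, ω⟩
    simp [brkt_apply, Prod.ext_iff, W_same]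
  · rintro ⟨A₁, v₁, ω₁⟩ ⟨A₂, v₂, ω₂⟩ ⟨A₃, v₃, ω₃⟩
    simp only [brkt_apply, Prod.mk_add_mk, Prod.ext_iff, Prod.fst_add, Prod.snd_add,
      Prod.fst_zero, Prod.snd_zero]
    refine ⟨?_, ?_, ?_⟩
    · exact lie_jacobi A₁ A₂ A₃
    · simp only [LieSubalgebra.coe_bracket, Ring.lie_def, map_sub, LinearMap.sub_apply,
        Module.End.mul_apply]
      abel
    · simp only [LieSubalgebra.coe_bracket]
      rw [rho_bracket, rho_bracket, rho_bracket]
      simp only [map_sub, map_add, rho_W]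
      rw [W_anti K V v₁ ((A₂ : Module.End K V) v₃), W_anti K V v₁ ((A₃ : Module.End K V) v₂),
        W_anti K V v₂ ((A₃ : Module.End K V) v₁), W_anti K V v₂ ((A₁ : Module.End K V) v₃),
        W_anti K V v₃ ((A₁ : Module.End K V) v₂), W_anti K V v₃ ((A₂ : Module.End K V) v₁)]
      abel
end

section
/- Let G ⊇ H be as follows: g a Lie algebra decomposed as g = ⊕_{p∈I} V_p, S an abelian semigroup with resonant decomposition S = ∪_{p∈I} S_p, and g_R = ⊕_p span(S_p) ⊗ V_p the resonant subalgebra of g_S = g ⊗ K[S]. Suppose each S_p is partitioned as S_p = Ŝ_p ∪ Š_p with Ŝ_p ∩ Š_p = ∅ and Š_p · Ŝ_q ⊆ ∩_{r∈i_{(p,q)}} Ŝ_r for all p, q. Set ǧ_R = ⊕_p span(Š_p) ⊗ V_p and ĝ_R = ⊕_p span(Ŝ_p) ⊗ V_p, so g_R = ǧ_R ⊕ ĝ_R. Then [ǧ_R, ĝ_R] ⊆ ĝ_R, and consequently the projection of the bracket of g_R onto ǧ_R along ĝ_R makes ǧ_R a Lie algebra (the reduced algebra |ǧ_R|). -/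
open TensorProduct

/-- The subspace `⊕_p span(Sets_p) ⊗ V_p` of the S-expanded algebra. -/
noncomputable def expSpan (K : Type*) [Field K] (L : Type*) [AddCommGroup L] [Module K L]
    {S : Type*} {I : Type*} (V : I → Submodule K L) (Sets : I → Set S) :
    Submodule K (L ⊗[K] (S →₀ K)) :=
  Submodule.span K {z : L ⊗[K] (S →₀ K) |
    ∃ p, ∃ x ∈ V p, ∃ s ∈ Sets p, z = x ⊗ₜ[K] Finsupp.single s 1}

/-- Reduction of resonant subalgebras: given a resonant subalgebra
`g_R = ⊕_p span(S_p) ⊗ V_p` of `g_S = g ⊗ K[S]` and partitions `S_p = Ŝ_p ∪ Š_p` with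
`Ŝ_p ∩ Š_p = ∅` and `Š_p · Ŝ_q ⊆ ∩_{r∈i(p,q)} Ŝ_r`, one has `[ǧ_R, ĝ_R] ⊆ ĝ_R` for
`ǧ_R = ⊕_p span(Š_p) ⊗ V_p` and `ĝ_R = ⊕_p span(Ŝ_p) ⊗ V_p`; consequently the projection of
the bracket onto `ǧ_R` along `ĝ_R` makes `ǧ_R` a Lie algebra (the reduced algebra `|ǧ_R|`). -/
theorem stmt18 (K : Type*) [Field K] (L : Type*) [LieRing L] [LieAlgebra K L]
    (S : Type*) [CommSemigroup S] (I : Type*)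
    (V : I → Submodule K L) (i : I → I → Set I)
    (hV : ∀ p q, ∀ x ∈ V p, ∀ y ∈ V q, ⁅x, y⁆ ∈ ⨆ r ∈ i p q, V r)
    (Sp Scheck Shat : I → Set S)
    (hres : ∀ p q, ∀ s ∈ Sp p, ∀ t ∈ Sp q, ∀ r ∈ i p q, s * t ∈ Sp r)
    (hpart : ∀ p, Sp p = Scheck p ∪ Shat p)
    (hdisj : ∀ p, Scheck p ∩ Shat p = ∅)
    (hredres : ∀ p q, ∀ s ∈ Scheck p, ∀ t ∈ Shat q, ∀ r ∈ i p q, s * t ∈ Shat r)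
    (B : (L ⊗[K] (S →₀ K)) →ₗ[K] (L ⊗[K] (S →₀ K)) →ₗ[K] (L ⊗[K] (S →₀ K)))
    (hB : ∀ (x y : L) (s t : S),
      B (x ⊗ₜ[K] Finsupp.single s 1) (y ⊗ₜ[K] Finsupp.single t 1)
        = ⁅x, y⁆ ⊗ₜ[K] Finsupp.single (s * t) 1)
    (hBalt : ∀ u, B u u = 0)
    (hBjac : ∀ u v w, B u (B v w) + B v (B w u) + B w (B u v) = 0) :
    (∀ u ∈ expSpan K L V Scheck, ∀ v ∈ expSpan K L V Shat, B u v ∈ expSpan K L V Shat) ∧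
    (∀ pr : (L ⊗[K] (S →₀ K)) →ₗ[K] (L ⊗[K] (S →₀ K)),
      (∀ u ∈ expSpan K L V Scheck, pr u = u) →
      (∀ v ∈ expSpan K L V Shat, pr v = 0) →
      (∀ u, pr u ∈ expSpan K L V Scheck) →
      (∀ u ∈ expSpan K L V Scheck, ∀ v ∈ expSpan K L V Scheck,
        pr (B u v) = - pr (B v u)) ∧
      (∀ u ∈ expSpan K L V Scheck, ∀ v ∈ expSpan K L V Scheck, ∀ w ∈ expSpan K L V Scheck,
        pr (B u (pr (B v w))) + pr (B v (pr (B w u))) + pr (B w (pr (B u v))) = 0)) := by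
  classical
  -- tensor membership helper
  have htens : ∀ (T : Set I) (st : S) (M : Submodule K (L ⊗[K] (S →₀ K))),
      (∀ r ∈ T, ∀ x ∈ V r, x ⊗ₜ[K] Finsupp.single st 1 ∈ M) →
      ∀ z ∈ ⨆ r ∈ T, V r, z ⊗ₜ[K] Finsupp.single st 1 ∈ M := by
    intro T st M hM z hz
    have hzeq : z ⊗ₜ[K] Finsupp.single st 1
        = (TensorProduct.mk K L (S →₀ K)).flip (Finsupp.single st 1) z := rfl
    rw [hzeq]
    have hmap : (⨆ r ∈ T, V r).map
        ((TensorProduct.mk K L (S →₀ K)).flip (Finsupp.single st 1)) ≤ M := by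
      rw [Submodule.map_iSup]
      apply iSup_le; intro r
      rw [Submodule.map_iSup]
      apply iSup_le; intro hr
      rintro _ ⟨x, hx, rfl⟩
      exact hM r hr x hx
    exact hmap (Submodule.mem_map_of_mem hz)
  -- bilinear span-induction helper
  have hbil : ∀ (T1 T2 : I → Set S) (M : Submodule K (L ⊗[K] (S →₀ K))),
      (∀ p q, ∀ x ∈ V p, ∀ y ∈ V q, ∀ s ∈ T1 p, ∀ t ∈ T2 q,
        ⁅x, y⁆ ⊗ₜ[K] Finsupp.single (s * t) 1 ∈ M) →
      ∀ u ∈ expSpan K L V T1, ∀ v ∈ expSpan K L V T2, B u v ∈ M := by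
    intro T1 T2 M hgen u hu
    refine Submodule.span_induction (p := fun u _ => ∀ v ∈ expSpan K L V T2, B u v ∈ M)
      ?_ ?_ ?_ ?_ hu
    · rintro _ ⟨p, x, hx, s, hs, rfl⟩ v hv
      refine Submodule.span_induction (p := fun v _ => B (x ⊗ₜ[K] Finsupp.single s 1) v ∈ M)
        ?_ ?_ ?_ ?_ hv
      · rintro _ ⟨q, y, hy, t, ht, rfl⟩
        rw [hB]
        exact hgen p q x hx y hy s hs t ht
      · simp
      · intro a b _ _ ha hb; rw [map_add]; exact M.add_mem ha hb
      · intro c a _ ha; rw [map_smul]; exact M.smul_mem c ha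
    · intro v hv; simp
    · intro a b _ _ ha hb v hv
      rw [map_add, LinearMap.add_apply]
      exact M.add_mem (ha v hv) (hb v hv)
    · intro c a _ ha v hv
      rw [map_smul, LinearMap.smul_apply]
      exact M.smul_mem c (ha v hv)
  -- [check, hat] ⊆ hat
  have claim1 : ∀ u ∈ expSpan K L V Scheck, ∀ v ∈ expSpan K L V Shat,
      B u v ∈ expSpan K L V Shat := by
    refine hbil Scheck Shat _ ?_
    intro p q x hx y hy s hs t ht
    refine htens (i p q) (s * t) _ ?_ ⁅x, y⁆ (hV p q x hx y hy)
    intro r hr z hz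
    exact Submodule.subset_span ⟨r, z, hz, s * t, hredres p q s hs t ht r hr, rfl⟩
  -- [check, check] ⊆ check ⊔ hat
  have claim2 : ∀ u ∈ expSpan K L V Scheck, ∀ v ∈ expSpan K L V Scheck,
      B u v ∈ expSpan K L V Scheck ⊔ expSpan K L V Shat := by
    refine hbil Scheck Scheck _ ?_
    intro p q x hx y hy s hs t ht
    have hsP : s ∈ Sp p := by rw [hpart p]; exact Or.inl hs
    have htP : t ∈ Sp q := by rw [hpart q]; exact Or.inl ht
    refine htens (i p q) (s * t) _ ?_ ⁅x, y⁆ (hV p q x hx y hy)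
    intro r hr z hz
    have hst : s * t ∈ Sp r := hres p q s hsP t htP r hr
    rw [hpart r] at hst
    rcases hst with h | h
    · exact Submodule.mem_sup_left (Submodule.subset_span ⟨r, z, hz, s * t, h, rfl⟩)
    · exact Submodule.mem_sup_right (Submodule.subset_span ⟨r, z, hz, s * t, h, rfl⟩)
  -- skew symmetry of B
  have hskew : ∀ u v, B u v + B v u = 0 := by
    intro u v
    have h := hBalt (u + v)
    simp only [map_add, LinearMap.add_apply, hBalt, zero_add, add_zero] at h
    rw [add_comm]; exact h
  refine ⟨claim1, ?_⟩
  intro pr hfix hkill hrange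
  -- key: pr (B u (pr z)) = pr (B u z) for u ∈ check, z ∈ check ⊔ hat
  have key : ∀ u ∈ expSpan K L V Scheck,
      ∀ z ∈ expSpan K L V Scheck ⊔ expSpan K L V Shat,
      pr (B u (pr z)) = pr (B u z) := by
    intro u hu z hz
    rcases Submodule.mem_sup.mp hz with ⟨a, ha, b, hb, rfl⟩
    have hprz : pr (a + b) = a := by rw [map_add, hfix a ha, hkill b hb, add_zero]
    rw [hprz, map_add, map_add, hkill _ (claim1 u hu b hb), add_zero]
  constructor
  · intro u hu v hv
    have h : pr (B u v) + pr (B v u) = 0 := by rw [← map_add pr, hskew, map_zero]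
    show pr (B u v) = - pr (B v u)
    exact eq_neg_of_add_eq_zero_left (a := pr (B u v)) (b := pr (B v u)) h
  · intro u hu v hv w hw
    rw [key u hu _ (claim2 v hv w hw), key v hv _ (claim2 w hw u hu),
      key w hw _ (claim2 u hu v hv), ← map_add, ← map_add, hBjac, map_zero]
end
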